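/- arXiv:2006.12241 — 7 statements merged into one kernel-verified Lean document; each statement's English description precedes it below -/
import Mathlib

section
/- Let A be a bounded self-adjoint operator on a Hilbert space H, φ, ψ ∈ H nonzero, B = A + ⟨·,φ⟩ψ, and F(λ) = ⟨(A−λ)⁻¹ψ, φ⟩ + 1 for λ ∈ ρ(A). Then a point λ ∈ ρ(A) is an eigenvalue of B if and only if F(λ) = 0, and in that case (A−λ)⁻¹ψ is a corresponding eigenvector. -/
/-!
If `(A - λ) R = 1 = R (A - λ)` and `B = A + f(·) ψ`, then `B x = λ x` means `(A - λ) x = -f(x) ψ`,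
i.e. `x = -f(x) R ψ`. So every eigenvector for `λ` is a multiple of `R ψ`, and applying `f` shows
that it exists exactly when `f (R ψ) = -1`.
-/

section RankOnePerturbation

variable {𝕜 M : Type*} [Field 𝕜] [AddCommGroup M] [Module 𝕜 M]
  {A B R : M →ₗ[𝕜] M} {f : M →ₗ[𝕜] 𝕜} {ψ : M} {lam : 𝕜}

theorem resolvent_apply_ne_zero (hR : ∀ x, A (R x) - lam • R x = x) (hψ : ψ ≠ 0) :
    R ψ ≠ 0 := by
  intro h
  apply hψ
  rw [← hR ψ, h, map_zero, smul_zero, sub_zero]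

theorem apply_resolvent_eq_smul_of_apply_eq_neg_one (hR : ∀ x, A (R x) - lam • R x = x)
    (hB : ∀ x, B x = A x + f x • ψ) (hf : f (R ψ) = -1) :
    B (R ψ) = lam • R ψ := by
  rw [hB, hf]
  linear_combination (norm := module) hR ψ

theorem eq_neg_smul_resolvent_of_apply_eq_smul (hR : ∀ x, R (A x - lam • x) = x)
    (hB : ∀ x, B x = A x + f x • ψ) {x : M} (hx : B x = lam • x) :
    x = -(f x • R ψ) := by
  have hsub : A x - lam • x = -(f x • ψ) := by
    rw [hB] at hx
    linear_combination (norm := module) hx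
  calc x = R (A x - lam • x) := (hR x).symm
    _ = -(f x • R ψ) := by rw [hsub, map_neg, map_smul]

theorem apply_resolvent_eq_neg_one_of_apply_eq_smul (hR : ∀ x, R (A x - lam • x) = x)
    (hB : ∀ x, B x = A x + f x • ψ) {x : M} (hx0 : x ≠ 0) (hx : B x = lam • x) :
    f (R ψ) = -1 := by
  have hxR := eq_neg_smul_resolvent_of_apply_eq_smul hR hB hx
  have hfx : f x ≠ 0 := fun h => hx0 (by rw [hxR, h, zero_smul, neg_zero])
  have key : f x * (f (R ψ) + 1) = 0 := by
    have := congrArg f hxR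
    rw [map_neg, map_smul, smul_eq_mul] at this
    linear_combination this
  exact add_eq_zero_iff_eq_neg.mp ((mul_eq_zero.mp key).resolve_left hfx)

end RankOnePerturbation

theorem stmt_1_general {H : Type*} [NormedAddCommGroup H] [InnerProductSpace ℂ H]
    (A B : H →L[ℂ] H)
    (φ ψ : H) (hψ : ψ ≠ 0)
    (hB : ∀ x, B x = A x + (inner ℂ φ x : ℂ) • ψ)
    (lam : ℂ) (R : H →L[ℂ] H)
    (hR1 : (A - lam • 1) * R = 1) (hR2 : R * (A - lam • 1) = 1)
    (F : ℂ) (hF : F = (inner ℂ φ (R ψ) : ℂ) + 1) :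
    ((∃ x, x ≠ 0 ∧ B x = lam • x) ↔ F = 0) ∧
      (F = 0 → R ψ ≠ 0 ∧ B (R ψ) = lam • R ψ) := by
  have hright : ∀ x, (A : H →ₗ[ℂ] H) (R x) - lam • R x = x := fun x => by
    simpa using congr($hR1 x)
  have hleft : ∀ x, (R : H →ₗ[ℂ] H) (A x - lam • x) = x := fun x => by
    simpa using congr($hR2 x)
  have hB' : ∀ x, (B : H →ₗ[ℂ] H) x = A x + innerₛₗ ℂ φ x • ψ := hB
  have hRψ : R ψ ≠ 0 := resolvent_apply_ne_zero hright hψ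
  have hF0 : F = 0 ↔ inner ℂ φ (R ψ) = -1 := by rw [hF, add_eq_zero_iff_eq_neg]
  have heig : F = 0 → B (R ψ) = lam • R ψ := fun h =>
    apply_resolvent_eq_smul_of_apply_eq_neg_one hright hB' (hF0.mp h)
  refine ⟨⟨fun ⟨x, hx0, hx⟩ => ?_, fun h => ⟨R ψ, hRψ, heig h⟩⟩, fun h => ⟨hRψ, heig h⟩⟩
  exact hF0.mpr (apply_resolvent_eq_neg_one_of_apply_eq_smul hleft hB' hx0 hx)

/-- For a bounded self-adjoint operator `A`, nonzero `φ ψ`,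
`B = A + ⟨·,φ⟩ψ`, and `λ ∈ ρ(A)` (witnessed by the resolvent `R = (A−λ)⁻¹`),
the point `λ` is an eigenvalue of `B` iff `F(λ) = ⟨(A−λ)⁻¹ψ,φ⟩+1 = 0`, and
in that case `(A−λ)⁻¹ψ` is a corresponding eigenvector. -/
theorem stmt_1 {H : Type*} [NormedAddCommGroup H] [InnerProductSpace ℂ H] [CompleteSpace H]
    (A B : H →L[ℂ] H) (hA : IsSelfAdjoint A)
    (φ ψ : H) (hφ : φ ≠ 0) (hψ : ψ ≠ 0)
    (hB : ∀ x, B x = A x + (inner ℂ φ x : ℂ) • ψ)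
    (lam : ℂ) (R : H →L[ℂ] H)
    (hR1 : (A - lam • 1) * R = 1) (hR2 : R * (A - lam • 1) = 1)
    (F : ℂ) (hF : F = (inner ℂ φ (R ψ) : ℂ) + 1) :
    ((∃ x, x ≠ 0 ∧ B x = lam • x) ↔ F = 0) ∧
      (F = 0 → R ψ ≠ 0 ∧ B (R ψ) = lam • R ψ) :=
  stmt_1_general A B φ ψ hψ hB lam R hR1 hR2 F hF
end

section
/- Let A be a bounded self-adjoint operator, B = A + ⟨·,φ⟩ψ, and λ* ∈ ρ(A) a zero of F(λ) = ⟨(A−λ)⁻¹ψ,φ⟩ + 1 such that F(λ*) = F'(λ*) = ⋯ = F^{(l)}(λ*) = 0. Then the vectors yₖ = (A−λ*)^{−(1+k)}ψ, k = 0,1,…,l, form a Jordan chain of B for the eigenvalue λ*: (B−λ*)y₀ = 0 and (B−λ*)yₖ = yₖ₋₁ for 1 ≤ k ≤ l. -/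
/-! Since `(A - λ) R = 1`, the perturbed operator satisfies
`(B - λ) R^(k+1) ψ = R^k ψ + ⟨φ, R^(k+1) ψ⟩ ψ`. For `k = 0` the coefficient is `F(λ) - 1 = -1`, so
the right side vanishes; for `1 ≤ k ≤ l` it is `F^(k)(λ)/k! = 0`, leaving `R^k ψ = y_(k-1)`. -/

theorem mul_pow_succ_of_mul_eq_one {M : Type*} [Monoid M] {a b : M} (h : a * b = 1) (n : ℕ) :
    a * b ^ (n + 1) = b ^ n := by
  rw [pow_succ', ← mul_assoc, h, one_mul]

section RankOnePerturbation

variable {𝕜 M : Type*} [CommRing 𝕜] [AddCommGroup M] [Module 𝕜 M] [TopologicalSpace M]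
  [IsTopologicalAddGroup M] [ContinuousConstSMul 𝕜 M]
  {A B R : M →L[𝕜] M} {f : M → 𝕜} {ψ : M} {lam : 𝕜}

theorem rankOnePerturbation_sub_smul_resolvent_pow (hB : ∀ x, B x = A x + f x • ψ)
    (hR : (A - lam • 1) * R = 1) (k : ℕ) :
    B ((R ^ (k + 1)) ψ) - lam • (R ^ (k + 1)) ψ = (R ^ k) ψ + f ((R ^ (k + 1)) ψ) • ψ := by
  have hstep := congrArg (· ψ) (mul_pow_succ_of_mul_eq_one hR k)
  simp only [mul_apply_eq_comp, sub_apply, smul_apply, one_apply_eq_self] at hstep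
  rw [hB, ← hstep]
  abel

end RankOnePerturbation

theorem stmt_6_general {H : Type*} [NormedAddCommGroup H] [InnerProductSpace ℂ H]
    (A B : H →L[ℂ] H)
    (φ ψ : H)
    (hB : ∀ x, B x = A x + (inner ℂ φ x : ℂ) • ψ)
    (lam : ℂ) (R : H →L[ℂ] H)
    (hR1 : (A - lam • 1) * R = 1)
    (l : ℕ)
    (hF0 : (inner ℂ φ (R ψ) : ℂ) + 1 = 0)
    (hFk : ∀ k, 1 ≤ k → k ≤ l → (inner ℂ φ ((R ^ (k + 1)) ψ) : ℂ) = 0)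
    (y : ℕ → H) (hy : ∀ k, y k = (R ^ (k + 1)) ψ) :
    B (y 0) = lam • y 0 ∧ ∀ k, 1 ≤ k → k ≤ l → B (y k) - lam • y k = y (k - 1) := by
  have hchain := rankOnePerturbation_sub_smul_resolvent_pow hB hR1
  constructor
  · have hF0' : inner ℂ φ ((R ^ (0 + 1)) ψ) = (-1 : ℂ) := by
      rw [zero_add, pow_one]; linear_combination hF0
    rw [← sub_eq_zero, hy, hchain, hF0', pow_zero, one_apply_eq_self,
      neg_one_smul, add_neg_cancel]
  · intro k hk1 hkl
    obtain ⟨j, rfl⟩ := Nat.exists_eq_add_of_le' hk1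
    rw [hy, hy, hchain, hFk _ hk1 hkl, zero_smul, add_zero, Nat.add_sub_cancel]

/-- If `λ* ∈ ρ(A)` (with resolvent `R = (A−λ*)⁻¹`) is a zero of the
characteristic function `F` of order hypotheses `F(λ*) = F'(λ*) = ⋯ = F^{(l)}(λ*) = 0`
(expressed via `F^{(k)}(λ*)/k! = ⟨(A−λ*)^{−(1+k)}ψ, φ⟩`), then the vectors
`yₖ = (A−λ*)^{−(1+k)}ψ`, `k = 0,…,l`, form a Jordan chain of `B = A + ⟨·,φ⟩ψ`
at the eigenvalue `λ*`. -/
theorem stmt_6 {H : Type*} [NormedAddCommGroup H] [InnerProductSpace ℂ H] [CompleteSpace H]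
    (A B : H →L[ℂ] H) (hA : IsSelfAdjoint A)
    (φ ψ : H)
    (hB : ∀ x, B x = A x + (inner ℂ φ x : ℂ) • ψ)
    (lam : ℂ) (R : H →L[ℂ] H)
    (hR1 : (A - lam • 1) * R = 1) (hR2 : R * (A - lam • 1) = 1)
    (l : ℕ)
    (hF0 : (inner ℂ φ (R ψ) : ℂ) + 1 = 0)
    (hFk : ∀ k, 1 ≤ k → k ≤ l → (inner ℂ φ ((R ^ (k + 1)) ψ) : ℂ) = 0)
    (y : ℕ → H) (hy : ∀ k, y k = (R ^ (k + 1)) ψ) :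
    B (y 0) = lam • y 0 ∧ ∀ k, 1 ≤ k → k ≤ l → B (y k) - lam • y k = y (k - 1) :=
  stmt_6_general A B φ ψ hB lam R hR1 l hF0 hFk y hy
end

section
/- Let A be a bounded self-adjoint operator with simple discrete spectrum, B = A + ⟨·,φ⟩ψ, and λ* ∈ ρ(A) an eigenvalue of B. Then the algebraic multiplicity of λ* as an eigenvalue of B equals the order of λ* as a zero of the characteristic function F(λ) = ⟨(A−λ)⁻¹ψ,φ⟩ + 1. -/
/-!
With `R = (A - μ)⁻¹`, the Neumann series gives `F (μ + z) = 1 + ∑ₖ ⟪φ, R^(k+1) ψ⟫ zᵏ`. Solving the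
chain equations `(B - μ) y k = y (k - 1)` with `R` forces `y k = -∑_{i+j=k} ⟪φ, y i⟫ R^(j+1) ψ`;
pairing with `φ` shows that the Cauchy product of `(⟪φ, y i⟫)ᵢ`, whose first term is nonzero,
with the Taylor coefficients of `F` vanishes below the chain length, hence so do these
coefficients. Conversely, when the first `n + 1` coefficients vanish, `k ↦ -R^(k+1) ψ` is a chain
of length `n + 1`. So the maximal chain length is the index of the first nonzero Taylor
coefficient, which is the order of the zero of `F` at `μ`.
-/

/-- A Jordan chain of length `m` (vectors `y 0, …, y (m-1)`) of the operator `B`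
at the eigenvalue `μ`. -/
def JordanChain {H : Type*} [NormedAddCommGroup H] [InnerProductSpace ℂ H]
    (B : H →L[ℂ] H) (μ : ℂ) (m : ℕ) (y : ℕ → H) : Prop :=
  y 0 ≠ 0 ∧ B (y 0) = μ • y 0 ∧ ∀ k, 1 ≤ k → k < m → B (y k) - μ • y k = y (k - 1)

open Finset Topology

theorem HasFPowerSeriesAt.analyticOrderAt_eq {𝕜 E : Type*} [NontriviallyNormedField 𝕜]
    [NormedAddCommGroup E] [NormedSpace 𝕜 E] {f : 𝕜 → E} {p : FormalMultilinearSeries 𝕜 𝕜 E}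
    {z₀ : 𝕜} (hp : HasFPowerSeriesAt f p z₀) {m : ℕ} (hlt : ∀ k < m, p k = 0) (hm : p m ≠ 0) :
    analyticOrderAt f z₀ = m := by
  have hne : p ≠ 0 := fun h => hm (by rw [h]; rfl)
  have horder : p.order = m :=
    le_antisymm (Nat.sInf_le hm) <| not_lt.mp fun h => p.apply_order_ne_zero hne (hlt _ h)
  rw [hp.analyticAt.analyticOrderAt_eq_natCast, ← horder]
  exact ⟨_, ⟨_, hp.has_fpower_series_iterate_dslope_fslope p.order⟩,
    hp.iterate_dslope_fslope_ne_zero hne, .of_forall hp.eq_pow_order_mul_iterate_dslope⟩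

theorem eq_zero_of_sum_antidiagonal_mul_eq_zero {α : Type*} [Semiring α] [NoZeroDivisors α]
    {c b : ℕ → α} {n : ℕ} (hc : c 0 ≠ 0)
    (h : ∀ k < n, ∑ p ∈ antidiagonal k, c p.1 * b p.2 = 0) : ∀ k < n, b k = 0 := by
  intro k
  induction k using Nat.strong_induction_on with
  | _ k ih =>
    intro hk
    have hsingle : ∑ p ∈ antidiagonal k, c p.1 * b p.2 = c 0 * b k := by
      refine sum_eq_single_of_mem (0, k) (by simp) fun p hp hp0 => ?_
      have hsum : p.1 + p.2 = k := HasAntidiagonal.mem_antidiagonal.mp hp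
      have hp1 : p.1 ≠ 0 := fun h1 => hp0 (Prod.ext h1 (by simp_all))
      rw [ih p.2 (by omega) (by omega), mul_zero]
    exact (mul_eq_zero.mp (hsingle.symm.trans (h k hk))).resolve_left hc

theorem hasSum_inverse_sub_smul_one {𝕜 𝓐 : Type*} [NormedField 𝕜] [NormedRing 𝓐]
    [NormedAlgebra 𝕜 𝓐] [HasSummableGeomSeries 𝓐] {a R : 𝓐} {μ : 𝕜}
    (hR1 : (a - μ • 1) * R = 1) (hR2 : R * (a - μ • 1) = 1) {y : 𝕜} (hy : ‖y • R‖ < 1) :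
    HasSum (fun n => y ^ n • R ^ (n + 1)) (Ring.inverse (a - (μ + y) • 1)) := by
  have hRcomm : Commute (a - μ • 1) R := hR1.trans hR2.symm
  have hcomm : Commute (a - μ • 1) (1 - y • R) :=
    (Commute.one_right _).sub_right (hRcomm.smul_right y)
  have hfac : a - (μ + y) • 1 = (a - μ • 1) * (1 - y • R) := by
    rw [mul_sub, mul_one, mul_smul_comm, hR1, add_smul]; abel
  have hinv : Ring.inverse (a - μ • 1) = R := Ring.inverse_unit ⟨_, R, hR1, hR2⟩
  rw [hfac, Ring.mul_inverse_rev' hcomm, hinv]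
  simpa only [smul_pow, smul_mul_assoc, ← pow_succ] using
    (hasSum_geom_series_inverse _ hy).mul_right R

section RankOnePerturbation

variable {H : Type*} [NormedAddCommGroup H] [InnerProductSpace ℂ H]
  {A B R : H →L[ℂ] H} {φ ψ : H} {μ : ℂ}

/-- For `R = (A - μ)⁻¹`, the Taylor coefficients at `μ` of `z ↦ ⟪φ, (A - z)⁻¹ ψ⟫ + 1`. -/
noncomputable def charCoeff (R : H →L[ℂ] H) (φ ψ : H) (k : ℕ) : ℂ :=
  inner ℂ φ ((R ^ (k + 1)) ψ) + if k = 0 then 1 else 0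

theorem eq_resolvent_sub_smul_of_sub_smul_eq (hB : ∀ x, B x = A x + inner ℂ φ x • ψ)
    (hR2 : R * (A - μ • 1) = 1) {x z : H} (h : B x - μ • x = z) :
    x = R z - inner ℂ φ x • R ψ := by
  have hAx : (A - μ • 1) x = z - inner ℂ φ x • ψ := by
    rw [← h, hB]
    simp only [sub_apply, smul_apply, one_apply_eq_self]
    abel
  rw [← map_smul, ← map_sub, ← hAx, ← mul_apply_eq_comp, hR2, one_apply_eq_self]

theorem JordanChain.eq_neg_sum_antidiagonal (hB : ∀ x, B x = A x + inner ℂ φ x • ψ)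
    (hR2 : R * (A - μ • 1) = 1) {n : ℕ} {y : ℕ → H} (hy : JordanChain B μ n y) :
    ∀ k < n, y k = -∑ p ∈ antidiagonal k, inner ℂ φ (y p.1) • (R ^ (p.2 + 1)) ψ := by
  intro k
  induction k with
  | zero =>
    intro _
    simpa using eq_resolvent_sub_smul_of_sub_smul_eq hB hR2 (sub_eq_zero.mpr hy.2.1)
  | succ k ih =>
    intro hk
    have h := eq_resolvent_sub_smul_of_sub_smul_eq hB hR2 (hy.2.2 (k + 1) (by omega) hk)
    rw [Nat.add_sub_cancel, ih (by omega)] at h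
    rw [h, Nat.sum_antidiagonal_succ', map_neg, map_sum]
    simp only [map_smul, ← mul_apply_eq_comp, ← pow_succ', zero_add, pow_one]
    abel

theorem JordanChain.sum_antidiagonal_mul_charCoeff_eq_zero
    (hB : ∀ x, B x = A x + inner ℂ φ x • ψ) (hR2 : R * (A - μ • 1) = 1) {n : ℕ} {y : ℕ → H}
    (hy : JordanChain B μ n y) :
    ∀ k < n, ∑ p ∈ antidiagonal k, inner ℂ φ (y p.1) * charCoeff R φ ψ p.2 = 0 := by
  intro k hk
  have hinner := congrArg (inner ℂ φ) (hy.eq_neg_sum_antidiagonal hB hR2 k hk)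
  simp only [inner_neg_right, inner_sum, inner_smul_right] at hinner
  have hdiag : ∑ p ∈ antidiagonal k, inner ℂ φ (y p.1) * (if p.2 = 0 then 1 else 0) =
      inner ℂ φ (y k) := by
    rw [sum_eq_single_of_mem (k, 0) (by simp)]
    · simp
    · intro p hp hpk
      have : p.2 ≠ 0 := fun h2 => hpk (Prod.ext (by simp_all) h2)
      simp [this]
  simp only [charCoeff, mul_add, sum_add_distrib, hdiag]
  rw [hinner]; ring

theorem jordanChain_neg_resolvent_pow (hB : ∀ x, B x = A x + inner ℂ φ x • ψ)
    (hR1 : (A - μ • 1) * R = 1) (hRψ : R ψ ≠ 0) {n : ℕ} (hb : ∀ k ≤ n, charCoeff R φ ψ k = 0) :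
    JordanChain B μ (n + 1) (fun k => -(R ^ (k + 1)) ψ) := by
  have hstep : ∀ k, B (-(R ^ (k + 1)) ψ) - μ • -(R ^ (k + 1)) ψ
      = -(R ^ k) ψ - inner ℂ φ ((R ^ (k + 1)) ψ) • ψ := by
    intro k
    have hpow : (A - μ • 1) ((R ^ (k + 1)) ψ) = (R ^ k) ψ := by
      rw [pow_succ', mul_apply_eq_comp, ← mul_apply_eq_comp _ R, hR1, one_apply_eq_self]
    rw [hB, ← hpow]
    simp only [sub_apply, smul_apply, one_apply_eq_self, map_neg, inner_neg_right, neg_smul,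
      smul_neg]
    abel
  refine ⟨by simpa using hRψ, ?_, fun k hk1 hkn => ?_⟩
  · have hb0 : inner ℂ φ ((R ^ (0 + 1)) ψ) + 1 = 0 := by
      simpa [charCoeff] using hb 0 n.zero_le
    rw [← sub_eq_zero, hstep 0, eq_neg_of_add_eq_zero_left hb0, pow_zero, one_apply_eq_self,
      neg_one_smul, sub_neg_eq_add, neg_add_cancel]
  · obtain ⟨j, rfl⟩ : ∃ j, k = j + 1 := ⟨k - 1, by omega⟩
    have hbj : inner ℂ φ ((R ^ (j + 1 + 1)) ψ) = 0 := by
      simpa [charCoeff] using hb (j + 1) (by omega)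
    simp only [Nat.add_sub_cancel]
    rw [hstep, hbj, zero_smul, sub_zero]


theorem hasFPowerSeriesAt_charCoeff [CompleteSpace H] (hR1 : (A - μ • 1) * R = 1)
    (hR2 : R * (A - μ • 1) = 1) :
    HasFPowerSeriesAt (fun z => inner ℂ φ ((Ring.inverse (A - z • 1) : H →L[ℂ] H) ψ) + 1)
      (.ofScalars ℂ (charCoeff R φ ψ)) μ := by
  rw [hasFPowerSeriesAt_iff]
  have hsmall : ∀ᶠ y in 𝓝 (0 : ℂ), ‖y • R‖ < 1 := by
    have : Continuous fun y : ℂ => ‖y • R‖ := by fun_prop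
    exact this.continuousAt.eventually_lt continuousAt_const (by simp)
  filter_upwards [hsmall] with y hy
  let L : (H →L[ℂ] H) →L[ℂ] ℂ := (innerSL ℂ φ).comp (.apply ℂ H ψ)
  have hres := (hasSum_inverse_sub_smul_one hR1 hR2 hy).mapL L
  simp only [FormalMultilinearSeries.coeff_ofScalars, charCoeff, smul_add, smul_ite, smul_zero]
  refine HasSum.add ?_ ?_
  · simpa [L] using hres
  · simpa using hasSum_single (α := ℂ)
      (f := fun n : ℕ => if n = 0 then y ^ n • (1 : ℂ) else 0) 0 fun n hn => if_neg hn

end RankOnePerturbation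

theorem stmt_7_general {H : Type*} [NormedAddCommGroup H] [InnerProductSpace ℂ H] [CompleteSpace H]
    (A B : H →L[ℂ] H)
    (φ ψ : H)
    (hB : ∀ x, B x = A x + (inner ℂ φ x : ℂ) • ψ)
    (μ : ℂ) (R : H →L[ℂ] H)
    (hR1 : (A - μ • 1) * R = 1) (hR2 : R * (A - μ • 1) = 1)
    (F : ℂ → ℂ)
    (hF : ∀ z, F z = (inner ℂ φ ((Ring.inverse (A - z • 1) : H →L[ℂ] H) ψ) : ℂ) + 1)
    (m : ℕ)
    (hm : (∃ y, JordanChain B μ m y) ∧ ¬ ∃ y, JordanChain B μ (m + 1) y) :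
    analyticOrderAt F μ = (m : ℕ∞) := by
  obtain ⟨⟨y, hy⟩, hmax⟩ := hm
  have hy0 : y 0 = -(inner ℂ φ (y 0) • R ψ) := by
    simpa using eq_resolvent_sub_smul_of_sub_smul_eq hB hR2 (sub_eq_zero.mpr hy.2.1)
  obtain ⟨hc0, hRψ⟩ : inner ℂ φ (y 0) ≠ 0 ∧ R ψ ≠ 0 :=
    smul_ne_zero_iff.mp (neg_ne_zero.mp (hy0 ▸ hy.1))
  have hlt : ∀ k < m, charCoeff R φ ψ k = 0 :=
    eq_zero_of_sum_antidiagonal_mul_eq_zero (c := fun j => inner ℂ φ (y j)) hc0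
      (hy.sum_antidiagonal_mul_charCoeff_eq_zero hB hR2)
  have hm : charCoeff R φ ψ m ≠ 0 := fun h => hmax ⟨_, jordanChain_neg_resolvent_pow hB hR1 hRψ
    fun k hk => (Nat.lt_or_eq_of_le hk).elim (hlt k) (· ▸ h)⟩
  rw [show F = _ from funext hF]
  exact (hasFPowerSeriesAt_charCoeff hR1 hR2).analyticOrderAt_eq
    (fun k hk => FormalMultilinearSeries.ofScalars_eq_zero_of_scalar_zero ℂ (hlt k hk))
    (mt (FormalMultilinearSeries.ofScalars_eq_zero ℂ m).mp hm)

/-- For `A` bounded self-adjoint with simple discrete spectrum and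
`B = A + ⟨·,φ⟩ψ`, the algebraic multiplicity (largest Jordan chain length) of an
eigenvalue `λ* ∈ ρ(A)` of `B` equals the order of `λ*` as a zero of the
characteristic function `F(λ) = ⟨(A−λ)⁻¹ψ,φ⟩ + 1`. -/
theorem stmt_7 {H : Type*} [NormedAddCommGroup H] [InnerProductSpace ℂ H] [CompleteSpace H]
    {ι : Type*} (v : HilbertBasis ι ℂ H) (lam : ι → ℝ) (hlam : Function.Injective lam)
    (A B : H →L[ℂ] H) (hA : IsSelfAdjoint A)
    (hAv : ∀ i, A (v i) = (lam i : ℂ) • v i)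
    (φ ψ : H)
    (hB : ∀ x, B x = A x + (inner ℂ φ x : ℂ) • ψ)
    (μ : ℂ) (R : H →L[ℂ] H)
    (hR1 : (A - μ • 1) * R = 1) (hR2 : R * (A - μ • 1) = 1)
    (heig : ∃ x, x ≠ 0 ∧ B x = μ • x)
    (F : ℂ → ℂ)
    (hF : ∀ z, F z = (inner ℂ φ ((Ring.inverse (A - z • 1) : H →L[ℂ] H) ψ) : ℂ) + 1)
    (hanal : AnalyticAt ℂ F μ)
    (m : ℕ)
    (hm : (∃ y, JordanChain B μ m y) ∧ ¬ ∃ y, JordanChain B μ (m + 1) y) :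
    analyticOrderAt F μ = (m : ℕ∞) :=
  stmt_7_general A B φ ψ hB μ R hR1 hR2 F hF m hm
end

section
/- Let A be an n×n Hermitian matrix with pairwise distinct eigenvalues λ₁,…,λₙ and orthonormal eigenvectors v₁,…,vₙ, and let φ ∈ ℂⁿ satisfy ⟨φ, vₖ⟩ ≠ 0 for all k. Then for any pairwise distinct complex numbers z₁,…,z_k and positive integers m₁,…,m_k with m₁+⋯+m_k = n, there exists a unique vector ψ ∈ ℂⁿ such that the characteristic polynomial of B = A + ψφ* equals ∏_{j=1}^k (z − zⱼ)^{mⱼ} (i.e. B has eigenvalues zⱼ of algebraic multiplicity mⱼ). -/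
/-!
In an eigenbasis of `A`, the matrix of `A + ψφ*` is `diag λ + a cᵀ` with `aₖ = ⟨vₖ, ψ⟩` and
`cₖ = ⟨φ, vₖ⟩`, so by the matrix determinant lemma its characteristic polynomial is
`p - ∑ₖ aₖ cₖ pₖ`, where `p = ∏ᵢ (X - λᵢ)` and `pₖ = ∏_{i ≠ k} (X - λᵢ)`. Evaluating at `λⱼ`
kills every term except `-aⱼ cⱼ pⱼ(λⱼ)`, and `cⱼ pⱼ(λⱼ) ≠ 0`, so the target polynomial `q`
determines `a`, hence `ψ`. Conversely, for this `a` the difference with `q` has degree `< n`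
(both are monic of degree `n`) and vanishes at the `n` distinct nodes `λⱼ`, so it is zero.
-/

open Polynomial Finset Lagrange Matrix

section RankOnePerturbation

variable {K ι : Type*} [Field K] [Fintype ι] [DecidableEq ι]

theorem Matrix.det_diagonal_add_replicateCol_mul_replicateRow {d : ι → K} (hd : ∀ i, d i ≠ 0)
    (u w : ι → K) :
    (diagonal d + replicateCol (Fin 1) u * replicateRow (Fin 1) w).det
      = ∏ i, d i + ∑ k, u k * w k * ∏ i ∈ univ.erase k, d i := by
  have hD : IsUnit (diagonal d).det := by
    simpa [isUnit_iff_ne_zero, prod_ne_zero_iff] using hd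
  have hinv : (diagonal d)⁻¹ = diagonal fun i ↦ (d i)⁻¹ :=
    inv_eq_right_inv (by simp [diagonal_mul_diagonal, hd])
  rw [det_add_mul _ _ hD, det_diagonal, det_unique, hinv]
  simp only [Fin.default_eq_zero, add_apply, one_apply_eq, mul_apply, replicateRow_apply,
    replicateCol_apply, diagonal_apply, mul_add, mul_one, mul_sum, mul_ite, mul_zero, sum_ite_eq',
    mem_univ, if_true]
  congr 1
  refine sum_congr rfl fun k _ ↦ ?_
  rw [← mul_prod_erase univ d (mem_univ k)]
  field_simp [hd k]

theorem Matrix.charpoly_diagonal_add_replicateCol_mul_replicateRow [Infinite K] (μ u w : ι → K) :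
    (diagonal μ + replicateCol (Fin 1) u * replicateRow (Fin 1) w).charpoly
      = nodal univ μ - ∑ k, (u k * w k) • nodal (univ.erase k) μ := by
  refine eq_of_infinite_eval_eq _ _ ((Set.finite_range μ).infinite_compl.mono fun x hx ↦ ?_)
  have hxμ : ∀ i, x - μ i ≠ 0 := fun i ↦ sub_ne_zero.2 fun h ↦ hx ⟨i, h.symm⟩
  have hsub : scalar ι x - (diagonal μ + replicateCol (Fin 1) u * replicateRow (Fin 1) w)
      = diagonal (fun i ↦ x - μ i) + replicateCol (Fin 1) (-u) * replicateRow (Fin 1) w := by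
    ext i j
    rcases eq_or_ne i j with rfl | h
    · simp [scalar_apply, mul_apply]
      ring
    · simp [scalar_apply, mul_apply, h]
  simp only [Set.mem_ofPred_eq, eval_charpoly, hsub,
    det_diagonal_add_replicateCol_mul_replicateRow hxμ, eval_sub, eval_finsetSum, eval_smul,
    eval_nodal, smul_eq_mul, Pi.neg_apply, neg_mul, sum_neg_distrib]
  ring

theorem Lagrange.eval_nodal_sub_sum_smul_nodal_erase (μ w : ι → K) (j : ι) :
    eval (μ j) (nodal univ μ - ∑ k, w k • nodal (univ.erase k) μ)
      = -(w j * eval (μ j) (nodal (univ.erase j) μ)) := by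
  rw [eval_sub, eval_nodal_at_node (mem_univ j), zero_sub, eval_finsetSum,
    sum_eq_single j (fun k _ hkj ↦ by
      rw [eval_smul, eval_nodal_at_node (by simpa using Ne.symm hkj), smul_zero]) (by simp),
    eval_smul, smul_eq_mul]

theorem Lagrange.sum_smul_nodal_erase_mem_degreeLT (μ w : ι → K) :
    ∑ k, w k • nodal (univ.erase k) μ ∈ degreeLT K (Fintype.card ι) :=
  Submodule.sum_mem _ fun k _ ↦ Submodule.smul_mem _ _ <| mem_degreeLT.2 <| by
    rw [degree_nodal, card_erase_of_mem (mem_univ k), card_univ, Nat.cast_lt]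
    exact Nat.sub_lt (Fintype.card_pos_iff.2 ⟨k⟩) one_pos

theorem Lagrange.degree_nodal_sub_sum_smul_nodal_erase_sub_lt (μ w : ι → K) {q : K[X]}
    (hq : q.Monic) (hqdeg : q.natDegree = Fintype.card ι) :
    (nodal univ μ - ∑ k, w k • nodal (univ.erase k) μ - q).degree < Fintype.card ι := by
  have hnodal : (nodal univ μ - q).degree < Fintype.card ι := by
    have hdeg : (nodal univ μ).degree = q.degree := by
      rw [degree_nodal, degree_eq_natDegree hq.ne_zero, hqdeg, card_univ]
    simpa [degree_nodal] using
      degree_sub_lt_left hdeg nodal_ne_zero (by rw [nodal_monic.leadingCoeff, hq.leadingCoeff])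
  rw [sub_right_comm, ← mem_degreeLT]
  exact Submodule.sub_mem _ (mem_degreeLT.2 hnodal) (sum_smul_nodal_erase_mem_degreeLT μ w)

theorem Lagrange.existsUnique_nodal_sub_sum_smul_nodal_erase_eq {μ : ι → K}
    (hμ : Function.Injective μ) {c : ι → K} (hc : ∀ k, c k ≠ 0) {q : K[X]} (hq : q.Monic)
    (hqdeg : q.natDegree = Fintype.card ι) :
    ∃! a : ι → K, nodal univ μ - ∑ k, (a k * c k) • nodal (univ.erase k) μ = q := by
  have he : ∀ j, eval (μ j) (nodal (univ.erase j) μ) ≠ 0 := fun j ↦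
    eval_nodal_not_at_node fun i hi ↦ hμ.ne (ne_of_mem_erase hi).symm
  refine ⟨fun j ↦ -eval (μ j) q / (c j * eval (μ j) (nodal (univ.erase j) μ)), ?_,
    fun a ha ↦ funext fun j ↦ ?_⟩
  · refine eq_of_degree_sub_lt_of_eval_index_eq univ hμ.injOn
      (by simpa using degree_nodal_sub_sum_smul_nodal_erase_sub_lt μ _ hq hqdeg) fun j _ ↦ ?_
    rw [eval_nodal_sub_sum_smul_nodal_erase]
    field_simp [hc j, he j]
  · have hj := eval_nodal_sub_sum_smul_nodal_erase μ (fun k ↦ a k * c k) j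
    rw [ha] at hj
    field_simp [hc j, he j]
    linear_combination hj

variable {E : Type*} [AddCommGroup E] [Module K E] [Module.Finite K E]

theorem Module.Basis.charpoly_add_smulRight [Infinite K] (b : Basis ι K E) {T : E →ₗ[K] E}
    {μ : ι → K} (hT : ∀ i, T (b i) = μ i • b i) (ℓ : E →ₗ[K] K) (ψ : E) :
    (T + ℓ.smulRight ψ).charpoly
      = nodal univ μ - ∑ k, (b.repr ψ k * ℓ (b k)) • nodal (univ.erase k) μ := by
  have hM : LinearMap.toMatrix b b (T + ℓ.smulRight ψ)
      = diagonal μ + replicateCol (Fin 1) (b.repr ψ) * replicateRow (Fin 1) (ℓ ∘ b) := by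
    ext i j
    rcases eq_or_ne i j with rfl | h
    · simp [LinearMap.toMatrix_apply, hT, mul_apply, mul_comm]
    · simp [LinearMap.toMatrix_apply, hT, mul_apply, h, mul_comm]
  rw [← LinearMap.charpoly_toMatrix _ b, hM, charpoly_diagonal_add_replicateCol_mul_replicateRow]
  rfl

theorem Module.Basis.existsUnique_charpoly_add_smulRight_eq [Infinite K] (b : Basis ι K E)
    {T : E →ₗ[K] E} {μ : ι → K} (hT : ∀ i, T (b i) = μ i • b i) (hμ : Function.Injective μ)
    {ℓ : E →ₗ[K] K} (hℓ : ∀ i, ℓ (b i) ≠ 0) {q : K[X]} (hq : q.Monic)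
    (hqdeg : q.natDegree = Fintype.card ι) :
    ∃! ψ : E, (T + ℓ.smulRight ψ).charpoly = q :=
  (b.equivFun.toEquiv.existsUnique_congr fun ψ ↦ by simp [b.charpoly_add_smulRight hT]).2
    (existsUnique_nodal_sub_sum_smul_nodal_erase_eq hμ hℓ hq hqdeg)

end RankOnePerturbation

theorem stmt_12_general (n : ℕ)
    (A : EuclideanSpace ℂ (Fin n) →L[ℂ] EuclideanSpace ℂ (Fin n))
    (lam : Fin n → ℝ) (hlam : Function.Injective lam)
    (v : Fin n → EuclideanSpace ℂ (Fin n)) (hv : Orthonormal ℂ v)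
    (hAv : ∀ k, A (v k) = (lam k : ℂ) • v k)
    (φ : EuclideanSpace ℂ (Fin n)) (hφ : ∀ k, (inner ℂ (v k) φ : ℂ) ≠ 0)
    (K : ℕ) (z : Fin K → ℂ)
    (m : Fin K → ℕ) (hsum : ∑ j, m j = n) :
    ∃! ψ : EuclideanSpace ℂ (Fin n),
      LinearMap.charpoly
          ((A + (innerSL ℂ φ).smulRight ψ : EuclideanSpace ℂ (Fin n) →L[ℂ] EuclideanSpace ℂ (Fin n)) :
            EuclideanSpace ℂ (Fin n) →ₗ[ℂ] EuclideanSpace ℂ (Fin n))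
        = ∏ j, (Polynomial.X - Polynomial.C (z j)) ^ m j := by
  let b := basisOfLinearIndependentOfCardEqFinrank' v hv.linearIndependent (by simp)
  have hq : (∏ j, (X - C (z j)) ^ m j).Monic :=
    monic_prod_of_monic _ _ fun j _ ↦ (monic_X_sub_C _).pow _
  have hqdeg : (∏ j, (X - C (z j)) ^ m j).natDegree = Fintype.card (Fin n) := by
    rw [natDegree_prod_of_monic _ _ fun j _ ↦ (monic_X_sub_C _).pow _]
    simp [hsum]
  exact b.existsUnique_charpoly_add_smulRight_eq (T := A) (ℓ := innerSL ℂ φ)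
    (by simpa [b] using hAv) (Complex.ofReal_injective.comp hlam)
    (fun i ↦ by simpa [b, inner_eq_zero_symm] using hφ i) hq hqdeg

/-- Let `A` be Hermitian on `ℂⁿ` with pairwise distinct eigenvalues
`λₖ` and orthonormal eigenvectors `vₖ`, and let `φ` satisfy `⟨φ,vₖ⟩ ≠ 0` for all `k`
(the generic set). Then for pairwise distinct `z₁,…,z_k` and multiplicities with
`m₁+⋯+m_k = n` there is a unique `ψ` such that `B = A + ψφ*` has characteristic
polynomial `∏ⱼ (X − zⱼ)^{mⱼ}`. -/
theorem stmt_12 (n : ℕ)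
    (A : EuclideanSpace ℂ (Fin n) →L[ℂ] EuclideanSpace ℂ (Fin n))
    (hA : IsSelfAdjoint A)
    (lam : Fin n → ℝ) (hlam : Function.Injective lam)
    (v : Fin n → EuclideanSpace ℂ (Fin n)) (hv : Orthonormal ℂ v)
    (hAv : ∀ k, A (v k) = (lam k : ℂ) • v k)
    (φ : EuclideanSpace ℂ (Fin n)) (hφ : ∀ k, (inner ℂ (v k) φ : ℂ) ≠ 0)
    (K : ℕ) (z : Fin K → ℂ) (hz : Function.Injective z)
    (m : Fin K → ℕ) (hm : ∀ j, 0 < m j) (hsum : ∑ j, m j = n) :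
    ∃! ψ : EuclideanSpace ℂ (Fin n),
      LinearMap.charpoly
          ((A + (innerSL ℂ φ).smulRight ψ : EuclideanSpace ℂ (Fin n) →L[ℂ] EuclideanSpace ℂ (Fin n)) :
            EuclideanSpace ℂ (Fin n) →ₗ[ℂ] EuclideanSpace ℂ (Fin n))
        = ∏ j, (Polynomial.X - Polynomial.C (z j)) ^ m j :=
  stmt_12_general n A lam hlam v hv hAv φ hφ K z m hsum
end

section
/- Let A be an n×n Hermitian matrix with pairwise distinct eigenvalues λ₁,…,λₙ and orthonormal eigenvectors v₁,…,vₙ. Then for any complex number w ∉ spec(A) and any m ≤ n, there exist vectors φ, ψ ∈ ℂⁿ such that B = A + ψφ* has w as an eigenvalue of algebraic multiplicity at least m. -/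
open Polynomial Matrix Finset

open Polynomial Matrix

lemma aux_eval_charpoly {n : ℕ} (M : Matrix (Fin n) (Fin n) ℂ) (z : ℂ) :
    (M.charpoly).eval z = (Matrix.diagonal (fun _ => z) - M).det := by
  rw [Matrix.charpoly, ← Polynomial.coe_evalRingHom, RingHom.map_det]
  congr 1
  ext i j
  by_cases h : i = j <;>
    simp [h, Matrix.charmatrix_apply, Matrix.diagonal_apply, Matrix.one_apply]

lemma aux_det_rank_one {n : ℕ} (d c : Fin n → ℂ) (hd : ∀ k, d k ≠ 0) :
    (Matrix.diagonal d - Matrix.replicateCol Unit (fun _ => (1:ℂ)) * Matrix.replicateRow Unit c).det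
      = (∏ k, d k) * (1 - ∑ k, c k / d k) := by
  have h1 : Matrix.diagonal d - Matrix.replicateCol Unit (fun _ => (1:ℂ)) * Matrix.replicateRow Unit c
      = Matrix.diagonal d + Matrix.replicateCol Unit (fun _ => (-1:ℂ)) * Matrix.replicateRow Unit c := by
    rw [sub_eq_add_neg]
    congr 1
    ext i j
    simp [Matrix.mul_apply]
  have hdet : IsUnit (Matrix.diagonal d).det := by
    rw [Matrix.det_diagonal]
    exact (Finset.prod_ne_zero_iff.mpr fun k _ => hd k).isUnit
  rw [h1, Matrix.det_add_replicateCol_mul_replicateRow hdet]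
  rw [Matrix.det_diagonal, Matrix.det_unique]
  congr 1
  have hinv : (Matrix.diagonal d)⁻¹ = Matrix.diagonal (fun k => (d k)⁻¹) :=
    Matrix.inv_eq_right_inv (by
      rw [Matrix.diagonal_mul_diagonal,
        show (fun i => d i * (d i)⁻¹) = fun _ => (1:ℂ) from funext fun k => mul_inv_cancel₀ (hd k),
        Matrix.diagonal_one])
  rw [hinv]
  simp [Matrix.mul_apply, Matrix.diagonal, Ring.inverse_eq_inv, div_eq_mul_inv,
    sub_eq_add_neg, Finset.sum_neg_distrib]


open Polynomial Matrix Finset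

lemma aux_lagrange {n m : ℕ} (s : Finset (Fin n)) (hs : s.card = m) (lamC : Fin n → ℂ)
    (hinj : Set.InjOn lamC s) (w z : ℂ) :
    (∏ k ∈ s, (z - lamC k)) -
      ∑ k ∈ s, (-((lamC k - w)^m) / ∏ j ∈ s.erase k, (lamC k - lamC j)) *
        ∏ j ∈ s.erase k, (z - lamC j) = (z - w)^m := by
  set p : ℂ[X] := ∏ k ∈ s, (X - C (lamC k)) with hp
  have hpm : p.Monic := monic_prod_of_monic _ _ fun k _ => monic_X_sub_C _
  have hpd : p.degree = (m : WithBot ℕ) := by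
    rw [hp, degree_prod]
    simp [degree_X_sub_C, hs]
  have hwd : ((X - C w)^m : ℂ[X]).degree = (m : WithBot ℕ) := by
    rw [degree_pow, degree_X_sub_C]
    simp
  have hdeg : (p - (X - C w)^m).degree < (s.card : WithBot ℕ) := by
    rw [hs]
    calc (p - (X - C w)^m).degree < p.degree :=
          degree_sub_lt (by rw [hpd, hwd]) hpm.ne_zero
            (by rw [hpm.leadingCoeff, ((monic_X_sub_C w).pow m).leadingCoeff])
      _ = (m : WithBot ℕ) := hpd
  have hq : p - (X - C w)^m =
      Lagrange.interpolate s lamC (fun k => -((lamC k - w)^m)) := by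
    refine Lagrange.eq_interpolate_of_eval_eq _ hinj hdeg fun i hi => ?_
    have hp0 : p.eval (lamC i) = 0 := by
      rw [hp, eval_prod]
      exact Finset.prod_eq_zero hi (by simp)
    simp [hp0]
  have hev := congrArg (Polynomial.eval z) hq
  rw [eval_sub, eval_pow, eval_sub, eval_X, eval_C, Lagrange.interpolate_apply,
    eval_finset_sum] at hev
  have hevp : p.eval z = ∏ k ∈ s, (z - lamC k) := by
    rw [hp, eval_prod]; simp
  rw [hevp] at hev
  have hbasis : ∀ i ∈ s, (Lagrange.basis s lamC i).eval z =
      (∏ j ∈ s.erase i, (lamC i - lamC j))⁻¹ * ∏ j ∈ s.erase i, (z - lamC j) := by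
    intro i _
    rw [Lagrange.basis, eval_prod, ← Finset.prod_inv_distrib, ← Finset.prod_mul_distrib]
    exact Finset.prod_congr rfl fun j _ => by
      simp [Lagrange.basisDivisor]
  have hterm : ∀ i ∈ s, (C (-((lamC i - w)^m)) * Lagrange.basis s lamC i).eval z =
      (-((lamC i - w)^m) / ∏ j ∈ s.erase i, (lamC i - lamC j)) *
        ∏ j ∈ s.erase i, (z - lamC j) := by
    intro i hi
    rw [eval_mul, eval_C, hbasis i hi, div_eq_mul_inv, mul_assoc]
  rw [Finset.sum_congr rfl hterm] at hev
  linear_combination hev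

open Polynomial Matrix Finset

lemma aux_key {n m : ℕ} (s : Finset (Fin n)) (hs : s.card = m) (lamC : Fin n → ℂ)
    (hinj : Set.InjOn lamC s) (w z : ℂ) (hz : ∀ k, z - lamC k ≠ 0)
    (hlag : (∏ k ∈ s, (z - lamC k)) -
      ∑ k ∈ s, (-((lamC k - w)^m) / ∏ j ∈ s.erase k, (lamC k - lamC j)) *
        ∏ j ∈ s.erase k, (z - lamC j) = (z - w)^m) :
    (∏ k ∈ s, (z - lamC k)) * (1 - ∑ k ∈ s,
      (-((lamC k - w)^m) / ∏ j ∈ s.erase k, (lamC k - lamC j)) / (z - lamC k)) = (z - w)^m := by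
  rw [mul_sub, mul_one, Finset.mul_sum]
  have hterm : ∀ k ∈ s, (∏ j ∈ s, (z - lamC j)) *
      ((-((lamC k - w)^m) / ∏ j ∈ s.erase k, (lamC k - lamC j)) / (z - lamC k)) =
      (-((lamC k - w)^m) / ∏ j ∈ s.erase k, (lamC k - lamC j)) *
        ∏ j ∈ s.erase k, (z - lamC j) := by
    intro k hk
    rw [← Finset.prod_erase_mul s _ hk, div_eq_mul_inv _ (z - lamC k)]
    have h2 : (z - lamC k) * (z - lamC k)⁻¹ = 1 := mul_inv_cancel₀ (hz k)
    linear_combination ((-((lamC k - w)^m) / ∏ j ∈ s.erase k, (lamC k - lamC j)) *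
      ∏ j ∈ s.erase k, (z - lamC j)) * h2
  rw [Finset.sum_congr rfl hterm]
  exact hlag

/-- For `A` Hermitian on `ℂⁿ` with simple spectrum, any `w ∉ spec(A)`
and any `m ≤ n`, there exist `φ, ψ` such that `B = A + ψφ*` has `w` as an eigenvalue
of algebraic multiplicity at least `m`. -/
theorem stmt_14 (n : ℕ)
    (A : EuclideanSpace ℂ (Fin n) →L[ℂ] EuclideanSpace ℂ (Fin n))
    (hA : IsSelfAdjoint A)
    (lam : Fin n → ℝ) (hlam : Function.Injective lam)
    (v : Fin n → EuclideanSpace ℂ (Fin n)) (hv : Orthonormal ℂ v)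
    (hAv : ∀ k, A (v k) = (lam k : ℂ) • v k)
    (w : ℂ) (hw : ∀ k, w ≠ (lam k : ℂ)) (m : ℕ) (hm : m ≤ n) :
    ∃ φ ψ : EuclideanSpace ℂ (Fin n),
      m ≤ Polynomial.rootMultiplicity w
        (LinearMap.charpoly
          ((A + (innerSL ℂ φ).smulRight ψ : EuclideanSpace ℂ (Fin n) →L[ℂ] EuclideanSpace ℂ (Fin n)) :
            EuclideanSpace ℂ (Fin n) →ₗ[ℂ] EuclideanSpace ℂ (Fin n))) := by
  classical
  rcases Nat.eq_zero_or_pos m with rfl | hm0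
  · exact ⟨0, 0, Nat.zero_le _⟩
  haveI : Nonempty (Fin n) := Fin.pos_iff_nonempty.mp (lt_of_lt_of_le hm0 hm)
  have hcard : Fintype.card (Fin n) = Module.finrank ℂ (EuclideanSpace ℂ (Fin n)) := by
    simp
  set b : Module.Basis (Fin n) ℂ (EuclideanSpace ℂ (Fin n)) :=
    basisOfLinearIndependentOfCardEqFinrank hv.linearIndependent hcard with hbdef
  have hb : ⇑b = v := coe_basisOfLinearIndependentOfCardEqFinrank _ _
  obtain ⟨s, -, hs⟩ := Finset.exists_subset_card_eq (show m ≤ (Finset.univ : Finset (Fin n)).card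
    by simpa using hm)
  set lamC : Fin n → ℂ := fun k => (lam k : ℂ) with hlamC
  have hinj : Set.InjOn lamC s := fun a _ a' _ h => hlam (Complex.ofReal_injective h)
  set c : Fin n → ℂ := fun k => if k ∈ s then
    (-((lamC k - w)^m) / ∏ j ∈ s.erase k, (lamC k - lamC j)) else 0 with hc
  set φ : EuclideanSpace ℂ (Fin n) := ∑ k, (starRingEnd ℂ) (c k) • v k with hφ
  set ψ : EuclideanSpace ℂ (Fin n) := ∑ k, v k with hψ
  refine ⟨φ, ψ, ?_⟩
  set B : EuclideanSpace ℂ (Fin n) →ₗ[ℂ] EuclideanSpace ℂ (Fin n) :=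
    ((A + (innerSL ℂ φ).smulRight ψ : EuclideanSpace ℂ (Fin n) →L[ℂ] EuclideanSpace ℂ (Fin n)) :
      EuclideanSpace ℂ (Fin n) →ₗ[ℂ] EuclideanSpace ℂ (Fin n)) with hBdef
  have hinner : ∀ j, (inner ℂ φ (v j) : ℂ) = c j := by
    intro j
    rw [hφ]
    simpa only [starRingEnd_self_apply] using hv.inner_left_fintype (fun k => (starRingEnd ℂ) (c k)) j
  set M : Matrix (Fin n) (Fin n) ℂ :=
    Matrix.diagonal lamC + Matrix.replicateCol Unit (fun _ => (1:ℂ)) * Matrix.replicateRow Unit c with hMdef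
  have hM : LinearMap.toMatrix b b B = M := by
    ext k j
    rw [LinearMap.toMatrix_apply]
    have hBv : B (b j) = lamC j • v j + c j • ψ := by
      rw [hb, hBdef]
      simp only [ContinuousLinearMap.coe_coe, ContinuousLinearMap.add_apply,
        ContinuousLinearMap.smulRight_apply, innerSL_apply_apply]
      rw [hAv j, hinner j]
    rw [hBv, hψ]
    have hrepr : ∀ i, b.repr (v i) = Finsupp.single i 1 := by
      intro i
      rw [← congrFun hb i, Module.Basis.repr_self]
    rw [map_add, _root_.map_smul, _root_.map_smul, map_sum]
    simp only [hrepr]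
    simp only [hMdef, Matrix.add_apply, Matrix.diagonal_apply, Matrix.mul_apply,
      Finsupp.coe_add, Finsupp.coe_smul, Pi.add_apply, Pi.smul_apply, smul_eq_mul,
      Finsupp.coe_finset_sum, Finset.sum_apply, Finsupp.single_apply]
    by_cases hkj : k = j <;> simp [hkj, eq_comm]
  have hchar : LinearMap.charpoly B = M.charpoly := by
    rw [← LinearMap.charpoly_toMatrix B b, hM]
  set P : Polynomial ℂ :=
    (Polynomial.X - Polynomial.C w)^m * ∏ k ∈ sᶜ, (Polynomial.X - Polynomial.C (lamC k))
    with hPdef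
  have hMP : M.charpoly = P := by
    apply Polynomial.eq_of_infinite_eval_eq
    apply Set.Infinite.mono ?_ ((Set.finite_range lamC).infinite_compl)
    intro z hz
    have hz' : ∀ k, z - lamC k ≠ 0 := fun k =>
      sub_ne_zero.mpr fun h => hz ⟨k, h.symm⟩
    show eval z M.charpoly = eval z P
    rw [aux_eval_charpoly, hMdef, sub_add_eq_sub_sub, Matrix.diagonal_sub,
      aux_det_rank_one _ _ hz', hPdef]
    have hsum : ∑ k, c k / (z - lamC k) = ∑ k ∈ s,
        (-((lamC k - w)^m) / ∏ j ∈ s.erase k, (lamC k - lamC j)) / (z - lamC k) := by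
      rw [← Finset.sum_subset (Finset.subset_univ s)
        (fun x _ hx => by simp [hc, hx])]
      exact Finset.sum_congr rfl fun k hk => by rw [hc]; simp [hk]
    rw [hsum, ← Finset.prod_mul_prod_compl s (fun k => z - lamC k)]
    simp only [eval_mul, eval_pow, eval_sub, eval_X, eval_C, eval_prod]
    have hkey := aux_key s hs lamC hinj w z hz'
      (aux_lagrange s hs lamC hinj w z)
    linear_combination (∏ k ∈ sᶜ, (z - lamC k)) * hkey
  rw [hchar, hMP]
  rw [Polynomial.le_rootMultiplicity_iff (by rw [← hMP]; exact M.charpoly_monic.ne_zero)]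
  exact dvd_mul_right _ _
end

section
/- Let A be a bounded self-adjoint operator with simple discrete spectrum, unit eigenvector vₙ for the eigenvalue λₙ, and B = A + ⟨·,φ⟩ψ with bₙ := ⟨ψ,vₙ⟩ = 0 and aₙ := ⟨φ,vₙ⟩ ≠ 0. If λₙ is an eigenvalue of B admitting an associated vector (i.e. a Jordan chain of length ≥ 2), then F(λₙ) = 0, where F(λ) = ⟨(Aₙ−λ)⁻¹Pₙψ, φ⟩ + 1 with Pₙ the orthogonal projection onto Hₙ = {vₙ}^⊥ and Aₙ the restriction of A to Hₙ. -/
/-!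
Let `y₀ ≠ 0` be an eigenvector of `B` at `λₙ` with associated vector `y₁`, and put
`c = ⟪φ, y₀⟫`. Since `vₙ ⊥ ψ`, pairing `(B - λₙ) y₁ = y₀` with `vₙ` gives `y₀ ⊥ vₙ`, and
`(A - λₙ) u = ψ` makes `w = y₀ + c u` an eigenvector of `A` at `λₙ` orthogonal to `vₙ`.
The spectrum of `A` being simple, `w = 0`; so `y₀ = -c u` with `c ≠ 0`, and then
`c = ⟪φ, y₀⟫ = -c ⟪φ, u⟫` gives `⟪φ, u⟫ + 1 = 0`.
-/

open Module.End
open scoped InnerProductSpace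

section

variable {𝕜 E ι : Type*} [RCLike 𝕜] [NormedAddCommGroup E] [InnerProductSpace 𝕜 E]

theorem HilbertBasis.eq_zero_of_forall_inner_eq_zero [CompleteSpace E] (b : HilbertBasis ι 𝕜 E)
    {x : E} (hx : ∀ i, ⟪b i, x⟫_𝕜 = 0) : x = 0 := by
  have hrepr : b.repr x = 0 := lp.ext <| funext fun i => by
    simpa [HilbertBasis.repr_apply_apply] using hx i
  simpa using b.repr.map_eq_zero_iff.mp hrepr

theorem LinearMap.IsSymmetric.inner_eigenvector_apply {T : E →ₗ[𝕜] E} (hT : T.IsSymmetric)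
    {e : E} {r : ℝ} (he : T e = (r : 𝕜) • e) (x : E) : ⟪e, T x⟫_𝕜 = r * ⟪e, x⟫_𝕜 := by
  rw [← hT e x, he, inner_smul_left, RCLike.conj_ofReal]

theorem HilbertBasis.eq_zero_of_mem_eigenspace_of_inner_eq_zero [CompleteSpace E]
    (b : HilbertBasis ι 𝕜 E) {T : E →ₗ[𝕜] E} (hT : T.IsSymmetric) {lam : ι → ℝ}
    (hlam : Function.Injective lam) (hTb : ∀ i, T (b i) = (lam i : 𝕜) • b i) {n : ι} {x : E}
    (hx : T x = (lam n : 𝕜) • x) (hxn : ⟪b n, x⟫_𝕜 = 0) : x = 0 := by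
  refine b.eq_zero_of_forall_inner_eq_zero fun i => ?_
  obtain rfl | hin := eq_or_ne i n
  · exact hxn
  have hne : (lam i : 𝕜) ≠ lam n := by exact_mod_cast hlam.ne hin
  exact hT.orthogonalFamily_eigenspaces hne ⟨b i, mem_eigenspace_iff.mpr (hTb i)⟩
    ⟨x, mem_eigenspace_iff.mpr hx⟩

theorem inner_eigenvector_apply_sub_smul_of_perturbation {T : E →ₗ[𝕜] E} (hT : T.IsSymmetric)
    {B : E → E} {φ ψ : E} (hB : ∀ x, B x = T x + ⟪φ, x⟫_𝕜 • ψ) {e : E} {r : ℝ}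
    (he : T e = (r : 𝕜) • e) (heψ : ⟪e, ψ⟫_𝕜 = 0) (y : E) : ⟪e, B y - (r : 𝕜) • y⟫_𝕜 = 0 := by
  rw [hB, inner_sub_right, inner_add_right, inner_smul_right, inner_smul_right,
    hT.inner_eigenvector_apply he, heψ]
  ring

theorem apply_add_inner_smul_eq_smul_of_perturbation {T : E →ₗ[𝕜] E} {B : E → E} {φ ψ : E}
    (hB : ∀ x, B x = T x + ⟪φ, x⟫_𝕜 • ψ) {μ : 𝕜} {y u : E} (hy : B y = μ • y)
    (hu : T u - μ • u = ψ) :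
    T (y + ⟪φ, y⟫_𝕜 • u) = μ • (y + ⟪φ, y⟫_𝕜 • u) := by
  rw [hB, ← hu] at hy
  rw [map_add, map_smul, eq_sub_of_add_eq hy, smul_add, smul_sub, smul_comm μ]
  abel

end

theorem stmt_17_general {H : Type*} [NormedAddCommGroup H] [InnerProductSpace ℂ H] [CompleteSpace H]
    {ι : Type*} (v : HilbertBasis ι ℂ H) (lam : ι → ℝ) (hlam : Function.Injective lam)
    (A B : H →L[ℂ] H) (hA : IsSelfAdjoint A)
    (hAv : ∀ i, A (v i) = (lam i : ℂ) • v i)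
    (φ ψ : H)
    (hB : ∀ x, B x = A x + (inner ℂ φ x : ℂ) • ψ)
    (n : ι) (hbn : (inner ℂ (v n : H) ψ : ℂ) = 0)
    (hassoc : ∃ y0 y1 : H, y0 ≠ 0 ∧ B y0 = (lam n : ℂ) • y0 ∧
      B y1 - (lam n : ℂ) • y1 = y0)
    (u : H) (hu : u ∈ (Submodule.span ℂ {(v n : H)})ᗮ)
    (hAu : A u - (lam n : ℂ) • u = ψ) :
    (inner ℂ φ u : ℂ) + 1 = 0 := by
  obtain ⟨y0, y1, hy0, hBy0, hBy1⟩ := hassoc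
  have hsym : (A : H →ₗ[ℂ] H).IsSymmetric := hA.isSymmetric
  have hy0n : ⟪v n, y0⟫_ℂ = 0 :=
    hBy1 ▸ inner_eigenvector_apply_sub_smul_of_perturbation hsym hB (hAv n) hbn y1
  have hun : ⟪v n, u⟫_ℂ = 0 := hu (v n) (Submodule.mem_span_singleton_self _)
  set c := ⟪φ, y0⟫_ℂ
  have hw : y0 + c • u = 0 := by
    refine v.eq_zero_of_mem_eigenspace_of_inner_eq_zero hsym hlam hAv
      (apply_add_inner_smul_eq_smul_of_perturbation hB hBy0 hAu) ?_
    rw [inner_add_right, inner_smul_right, hy0n, hun, mul_zero, add_zero]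
  have hy0u : y0 = -(c • u) := eq_neg_of_add_eq_zero_left hw
  have hc : c ≠ 0 := fun hc0 => hy0 (by rw [hy0u, hc0, zero_smul, neg_zero])
  have hcu : c * (⟪φ, u⟫_ℂ + 1) = 0 := by
    have : c = -(c * ⟪φ, u⟫_ℂ) := by
      change ⟪φ, y0⟫_ℂ = _
      rw [hy0u, inner_neg_right, inner_smul_right]
    linear_combination this
  exact (mul_eq_zero.mp hcu).resolve_left hc

/-- Suppose `bₙ = ⟨ψ,vₙ⟩ = 0` and `aₙ = ⟨φ,vₙ⟩ ≠ 0`.  If `λₙ` is an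
eigenvalue of `B = A + ⟨·,φ⟩ψ` with an associated vector (Jordan chain of
length ≥ 2), then `F(λₙ) = ⟨(Aₙ−λₙ)⁻¹Pₙψ, φ⟩ + 1 = 0`; here the vector
`u = (Aₙ−λₙ)⁻¹Pₙψ` is characterized by `u ⊥ vₙ` and `(A−λₙ)u = ψ` (note
`Pₙψ = ψ` since `bₙ = 0`). -/
theorem stmt_17 {H : Type*} [NormedAddCommGroup H] [InnerProductSpace ℂ H] [CompleteSpace H]
    {ι : Type*} (v : HilbertBasis ι ℂ H) (lam : ι → ℝ) (hlam : Function.Injective lam)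
    (A B : H →L[ℂ] H) (hA : IsSelfAdjoint A)
    (hAv : ∀ i, A (v i) = (lam i : ℂ) • v i)
    (φ ψ : H)
    (hB : ∀ x, B x = A x + (inner ℂ φ x : ℂ) • ψ)
    (n : ι) (hbn : (inner ℂ (v n : H) ψ : ℂ) = 0) (han : (inner ℂ (v n : H) φ : ℂ) ≠ 0)
    (hassoc : ∃ y0 y1 : H, y0 ≠ 0 ∧ B y0 = (lam n : ℂ) • y0 ∧
      B y1 - (lam n : ℂ) • y1 = y0)
    (u : H) (hu : u ∈ (Submodule.span ℂ {(v n : H)})ᗮ)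
    (hAu : A u - (lam n : ℂ) • u = ψ) :
    (inner ℂ φ u : ℂ) + 1 = 0 :=
  stmt_17_general v lam hlam A B hA hAv φ ψ hB n hbn hassoc u hu hAu
end

section
/- Let A be a self-adjoint operator with simple discrete spectrum {λₙ}_{n∈I} satisfying inf_n |λ_{n+1} − λₙ| = d > 0, and let B = A + ⟨·,φ⟩ψ. Then for every ε > 0 there exists N > 0 such that every z ∈ ℂ with |Re z| ≥ N and dist(z, spec(A)) ≥ ε satisfies |F(z)| ≥ 1/2, where F(z) = Σₙ conj(aₙ)bₙ/(λₙ − z) + 1; consequently all such z lie in the resolvent set of B. -/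
open scoped ComplexConjugate InnerProductSpace
open Filter Topology InnerProductSpace

/-!
Away from the spectrum, the diagonal operator `R₀ = Σₙ (λₙ - z)⁻¹ ⟪vₙ, ·⟫ vₙ` inverts `A - z`,
and `F z = 1 + ⟪φ, R₀ ψ⟫`. The coefficients `conj aₙ * bₙ` are absolutely summable (`ℓ² · ℓ² ⊆ ℓ¹`),
each term `conj aₙ * bₙ / (λₙ - z)` tends to `0` as `|Re z| → ∞` and is bounded by `|aₙ bₙ| / ε`,
so Tannery's theorem gives `F z → 1`; in particular `‖F z‖ ≥ 1/2` for `|Re z|` large.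
Whenever `F z ≠ 0`, the Sherman–Morrison formula turns `R₀` into an inverse of `B - z`.
-/

namespace HilbertBasis

variable {ι 𝕜 E : Type*} [RCLike 𝕜] [NormedAddCommGroup E] [InnerProductSpace 𝕜 E]

noncomputable def diagonal (v : HilbertBasis ι 𝕜 E) (w : ι → 𝕜) {K : ℝ} (hK : 0 ≤ K)
    (hw : ∀ i, ‖w i‖ ≤ K) : E →L[𝕜] E :=
  v.repr.symm.toContinuousLinearEquiv.toContinuousLinearMap ∘L
    lp.mapCLM 2 (fun i => w i • ContinuousLinearMap.id 𝕜 𝕜) hK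
      (fun i => (norm_smul_le _ _).trans <|
        (mul_le_of_le_one_right (norm_nonneg _) ContinuousLinearMap.norm_id_le).trans (hw i)) ∘L
    v.repr.toContinuousLinearEquiv.toContinuousLinearMap

theorem repr_diagonal (v : HilbertBasis ι 𝕜 E) (w : ι → 𝕜) {K : ℝ} (hK : 0 ≤ K)
    (hw : ∀ i, ‖w i‖ ≤ K) (x : E) (i : ι) :
    v.repr (v.diagonal w hK hw x) i = w i * v.repr x i := by
  simp [diagonal]

theorem inner_diagonal (v : HilbertBasis ι 𝕜 E) (w : ι → 𝕜) {K : ℝ} (hK : 0 ≤ K)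
    (hw : ∀ i, ‖w i‖ ≤ K) (x : E) (i : ι) :
    ⟪v i, v.diagonal w hK hw x⟫_𝕜 = w i * ⟪v i, x⟫_𝕜 := by
  simpa only [v.repr_apply_apply] using v.repr_diagonal w hK hw x i

theorem eq_of_forall_inner_eq (v : HilbertBasis ι 𝕜 E) {x y : E}
    (h : ∀ i, ⟪v i, x⟫_𝕜 = ⟪v i, y⟫_𝕜) : x = y :=
  v.repr.injective <| lp.ext <| funext fun i => by simpa only [v.repr_apply_apply] using h i

theorem summable_norm_inner_mul_inner (v : HilbertBasis ι 𝕜 E) (x y : E) :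
    Summable fun i => ‖⟪x, v i⟫_𝕜 * ⟪v i, y⟫_𝕜‖ :=
  summable_norm_iff.2 (v.summable_inner_mul_inner x y)

end HilbertBasis

namespace LinearPMap

variable {𝕜 E : Type*} [RCLike 𝕜] [NormedAddCommGroup E] [InnerProductSpace 𝕜 E]

/-- `R` is an everywhere defined bounded inverse of `T - z`. -/
structure IsSubInverse (T : E →ₗ.[𝕜] E) (z : 𝕜) (R : E →L[𝕜] E) : Prop where
  mem_domain : ∀ g, R g ∈ T.domain
  sub_apply : ∀ g, T ⟨R g, mem_domain g⟩ - z • R g = g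
  apply_sub : ∀ f (hf : f ∈ T.domain), R (T ⟨f, hf⟩ - z • f) = f

-- Sherman–Morrison: `(A + ψ ⟪φ, ·⟫ - z)⁻¹ = R - (1 + ⟪φ, R ψ⟫)⁻¹ • R ψ ⟪φ, R ·⟫`.
theorem IsSubInverse.rankOne_vadd {A : E →ₗ.[𝕜] E} {z : 𝕜} {R : E →L[𝕜] E}
    (hR : A.IsSubInverse z R) (φ ψ : E) (hF : 1 + ⟪φ, R ψ⟫_𝕜 ≠ 0) :
    ((rankOne 𝕜 ψ φ : E →ₗ[𝕜] E) +ᵥ A).IsSubInverse z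
      (R - (1 + ⟪φ, R ψ⟫_𝕜)⁻¹ • rankOne 𝕜 (R ψ) φ ∘L R) := by
  set F := 1 + ⟪φ, R ψ⟫_𝕜
  have hAR (g : E) : A ⟨R g, hR.mem_domain g⟩ = g + z • R g :=
    eq_add_of_sub_eq (hR.sub_apply g)
  have happly (g : E) : (R - F⁻¹ • rankOne 𝕜 (R ψ) φ ∘L R) g = R g - (F⁻¹ * ⟪φ, R g⟫_𝕜) • R ψ := by
    simp [mul_smul]
  have hφR : ⟪φ, R ψ⟫_𝕜 = F - 1 := by simp [F]
  clear_value F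
  have hmem (g : E) : (R - F⁻¹ • rankOne 𝕜 (R ψ) φ ∘L R) g ∈ A.domain := by
    rw [happly]
    exact A.domain.sub_mem (hR.mem_domain g) (A.domain.smul_mem _ (hR.mem_domain ψ))
  refine ⟨hmem, fun g => ?_, fun f hf => ?_⟩
  · have hA : A ⟨_, hmem g⟩ = (g + z • R g) - (F⁻¹ * ⟪φ, R g⟫_𝕜) • (ψ + z • R ψ) := by
      rw [← hAR, ← hAR, ← A.map_smul, ← A.map_sub]
      exact congrArg A (Subtype.ext (happly g))
    simp only [vadd_apply, ContinuousLinearMap.coe_coe, rankOne_apply]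
    rw [hA, happly, inner_sub_right, inner_smul_right, hφR]
    match_scalars <;> field_simp <;> ring
  · have hRy : R (A ⟨f, hf⟩ + ⟪φ, f⟫_𝕜 • ψ - z • f) = f + ⟪φ, f⟫_𝕜 • R ψ := by
      rw [add_sub_right_comm, R.map_add, hR.apply_sub f hf, R.map_smul]
    simp only [vadd_apply, ContinuousLinearMap.coe_coe, rankOne_apply]
    rw [add_comm, happly, hRy, inner_add_right, inner_smul_right, hφR]
    have hscalar : F⁻¹ * (⟪φ, f⟫_𝕜 + ⟪φ, f⟫_𝕜 * (F - 1)) = ⟪φ, f⟫_𝕜 := by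
      field_simp
      ring
    rw [hscalar, add_sub_cancel_right]

end LinearPMap

namespace IsSelfAdjoint

variable {ι 𝕜 E : Type*} [RCLike 𝕜] [NormedAddCommGroup E] [InnerProductSpace 𝕜 E]
  [CompleteSpace E] {A : E →ₗ.[𝕜] E}

theorem exists_mem_domain_apply_eq (hA : IsSelfAdjoint A) {x y : E}
    (hxy : ∀ u : A.domain, ⟪y, u⟫_𝕜 = ⟪x, A u⟫_𝕜) : ∃ h : x ∈ A.domain, A ⟨x, h⟩ = y := by
  have hx : x ∈ A.adjoint.domain := LinearPMap.mem_adjoint_domain_of_exists x ⟨y, hxy⟩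
  rw [← hA.star_eq]
  exact ⟨hx, LinearPMap.adjoint_apply_eq hA.dense_domain ⟨x, hx⟩ hxy⟩

theorem inner_apply_eq_of_apply_eq_smul (hA : IsSelfAdjoint A) {x : E} (hx : x ∈ A.domain)
    {μ : ℝ} (hμ : A ⟨x, hx⟩ = (μ : 𝕜) • x) (u : A.domain) :
    ⟪x, A u⟫_𝕜 = μ * ⟪x, u⟫_𝕜 := by
  have hx' : x ∈ A.adjoint.domain := by rwa [← hA.star_eq] at hx
  have hAx : A.adjoint ⟨x, hx'⟩ = A ⟨x, hx⟩ := (le_of_eq hA.star_eq).2 rfl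
  rw [← LinearPMap.adjoint_isFormalAdjoint hA.dense_domain ⟨x, hx'⟩ u, hAx, hμ,
    inner_smul_left, RCLike.conj_ofReal]

variable (v : HilbertBasis ι 𝕜 E) {lam : ι → ℝ}
  (hAv : ∀ i, ∃ h : v i ∈ A.domain, A ⟨v i, h⟩ = (lam i : 𝕜) • v i)
include hAv

theorem inner_basis_apply (hA : IsSelfAdjoint A) (f : A.domain) (i : ι) :
    ⟪v i, A f⟫_𝕜 = lam i * ⟪v i, f⟫_𝕜 :=
  hA.inner_apply_eq_of_apply_eq_smul (hAv i).1 (hAv i).2 f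

theorem exists_mem_domain_apply_eq_of_inner_basis (hA : IsSelfAdjoint A) {x y : E}
    (hxy : ∀ i, ⟪v i, y⟫_𝕜 = lam i * ⟪v i, x⟫_𝕜) : ∃ h : x ∈ A.domain, A ⟨x, h⟩ = y :=
  hA.exists_mem_domain_apply_eq fun u => by
    rw [← v.tsum_inner_mul_inner y u, ← v.tsum_inner_mul_inner x (A u)]
    refine tsum_congr fun i => ?_
    rw [inner_basis_apply v hAv hA, ← inner_conj_symm y, hxy, ← inner_conj_symm x, map_mul,
      RCLike.conj_ofReal]
    ring

theorem isSubInverse_of_inner_basis (hA : IsSelfAdjoint A) {z : 𝕜} (hz : ∀ i, (lam i : 𝕜) ≠ z)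
    {R : E →L[𝕜] E} (hR : ∀ x i, ⟪v i, R x⟫_𝕜 = ((lam i : 𝕜) - z)⁻¹ * ⟪v i, x⟫_𝕜) :
    A.IsSubInverse z R := by
  have hmem (g : E) : ∃ h : R g ∈ A.domain, A ⟨R g, h⟩ = g + z • R g :=
    hA.exists_mem_domain_apply_eq_of_inner_basis v hAv fun i => by
      rw [inner_add_right, inner_smul_right, hR]
      field_simp [sub_ne_zero.2 (hz i)]
      ring
  refine ⟨fun g => (hmem g).1, fun g => by rw [(hmem g).2, add_sub_cancel_right],
    fun f hf => v.eq_of_forall_inner_eq fun i => ?_⟩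
  rw [hR, inner_sub_right, inner_basis_apply v hAv hA ⟨f, hf⟩, inner_smul_right]
  field_simp [sub_ne_zero.2 (hz i)]

theorem exists_isSubInverse (hA : IsSelfAdjoint A) {z : 𝕜} {ε : ℝ} (hε : 0 < ε)
    (hz : ∀ i, ε ≤ ‖z - lam i‖) :
    ∃ R : E →L[𝕜] E, A.IsSubInverse z R ∧
      ∀ x i, ⟪v i, R x⟫_𝕜 = ((lam i : 𝕜) - z)⁻¹ * ⟪v i, x⟫_𝕜 := by
  have hw (i : ι) : ‖((lam i : 𝕜) - z)⁻¹‖ ≤ ε⁻¹ := by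
    rw [norm_inv, norm_sub_rev]
    exact inv_anti₀ hε (hz i)
  have hR := v.inner_diagonal _ (inv_nonneg.2 hε.le) hw
  refine ⟨_, hA.isSubInverse_of_inner_basis v hAv (fun i hi => ?_) hR, hR⟩
  exact (hε.trans_le (hz i)).ne' (by rw [← hi, sub_self, norm_zero])

end IsSelfAdjoint

theorem tendsto_tsum_div_sub_nhds_zero {ι : Type*} (lam : ι → ℝ) {c : ι → ℂ}
    (hc : Summable (‖c ·‖)) {ε : ℝ} (hε : 0 < ε) :
    Tendsto (fun z : ℂ => ∑' i, c i / (lam i - z))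
      (comap (|·.re|) atTop ⊓ 𝓟 {z | ∀ i, ε ≤ ‖z - lam i‖}) (𝓝 0) := by
  have hlim (i : ι) : Tendsto (fun z : ℂ => c i / (lam i - z)) (comap (|·.re|) atTop) (𝓝 0) := by
    have hnorm : Tendsto (fun z : ℂ => ‖(lam i : ℂ) - z‖) (comap (|·.re|) atTop) atTop := by
      refine tendsto_atTop_mono (fun z => ?_)
        (tendsto_atTop_add_const_right _ (-|lam i|) tendsto_comap)
      calc |z.re| + -|lam i| ≤ |z.re - lam i| := by
            linarith [abs_sub_abs_le_abs_sub z.re (lam i)]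
        _ = |((lam i : ℂ) - z).re| := by simp [abs_sub_comm]
        _ ≤ ‖(lam i : ℂ) - z‖ := Complex.abs_re_le_norm _
    simpa [div_eq_mul_inv] using
      (tendsto_inv₀_cobounded.comp (tendsto_norm_atTop_iff_cobounded.1 hnorm)).const_mul (c i)
  have hbound : ∀ᶠ z in comap (|·.re|) atTop ⊓ 𝓟 {z | ∀ i, ε ≤ ‖z - lam i‖},
      ∀ i, ‖c i / (lam i - z)‖ ≤ ‖c i‖ / ε :=
    eventually_inf_principal.2 <| .of_forall fun z hz i => by
      rw [norm_div, norm_sub_rev]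
      exact div_le_div_of_nonneg_left (norm_nonneg _) hε (hz i)
  simpa using tendsto_tsum_of_dominated_convergence (hc.div_const ε)
    (fun i => (hlim i).mono_left inf_le_left) hbound

theorem exists_forall_norm_tsum_div_sub_le {ι : Type*} (lam : ι → ℝ) {c : ι → ℂ}
    (hc : Summable (‖c ·‖)) {ε δ : ℝ} (hε : 0 < ε) (hδ : 0 < δ) :
    ∃ N > (0 : ℝ), ∀ z : ℂ, N ≤ |z.re| → (∀ i, ε ≤ ‖z - lam i‖) →
      ‖∑' i, c i / (lam i - z)‖ ≤ δ := by
  have := (tendsto_tsum_div_sub_nhds_zero lam hc hε).eventually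
    (Metric.closedBall_mem_nhds 0 hδ)
  rw [eventually_inf_principal, eventually_comap, eventually_atTop] at this
  obtain ⟨N, hN⟩ := this
  refine ⟨max N 1, by positivity, fun z hz hdist => ?_⟩
  simpa using hN _ (le_of_max_le_left hz) z rfl hdist

theorem stmt_18_general {H : Type*} [NormedAddCommGroup H] [InnerProductSpace ℂ H] [CompleteSpace H]
    (v : HilbertBasis ℤ ℂ H) (lam : ℤ → ℝ)
    (A : H →ₗ.[ℂ] H) (hA : IsSelfAdjoint A)
    (hAv : ∀ n : ℤ, ∃ h : (v n : H) ∈ A.domain, A ⟨v n, h⟩ = (lam n : ℂ) • (v n : H))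
    (φ ψ : H)
    (a b : ℤ → ℂ)
    (ha : ∀ n, a n = (inner ℂ (v n : H) φ : ℂ)) (hb : ∀ n, b n = (inner ℂ (v n : H) ψ : ℂ))
    (F : ℂ → ℂ)
    (hF : ∀ z, F z = ∑' n, starRingEnd ℂ (a n) * b n / ((lam n : ℂ) - z) + 1) :
    ∀ ε > 0, ∃ N > (0 : ℝ), ∀ z : ℂ, N ≤ |z.re| →
      (∀ n, ε ≤ ‖z - (lam n : ℂ)‖) →
      (1 / 2 ≤ ‖F z‖ ∧
        -- `z` is a resolvent point of `B = A + ⟨·,φ⟩ψ`: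
        ∃ R : H →L[ℂ] H,
          (∀ g, R g ∈ A.domain) ∧
          (∀ g, ∀ h : R g ∈ A.domain,
            A ⟨R g, h⟩ + (inner ℂ φ (R g) : ℂ) • ψ - z • R g = g) ∧
          (∀ f : H, ∀ h : f ∈ A.domain,
            R (A ⟨f, h⟩ + (inner ℂ φ f : ℂ) • ψ - z • f) = f)) := by
  intro ε hε
  have hab (n : ℤ) : conj (a n) * b n = ⟪φ, v n⟫_ℂ * ⟪v n, ψ⟫_ℂ := by
    rw [ha, hb, inner_conj_symm]
  obtain ⟨N, hN, hsmall⟩ := exists_forall_norm_tsum_div_sub_le lam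
    (c := fun n => conj (a n) * b n)
    (by simpa only [hab] using v.summable_norm_inner_mul_inner φ ψ) hε one_half_pos
  refine ⟨N, hN, fun z hre hdist => ?_⟩
  obtain ⟨R, hR, hRv⟩ := hA.exists_isSubInverse v hAv hε hdist
  have hFz : F z = 1 + ⟪φ, R ψ⟫_ℂ := by
    rw [hF, add_comm, ← v.tsum_inner_mul_inner]
    congr 1
    refine tsum_congr fun n => ?_
    rw [hRv, hab, div_eq_mul_inv, mul_left_comm]
    exact mul_comm _ _
  have hhalf : 1 / 2 ≤ ‖F z‖ := by
    have hS : ‖F z - 1‖ ≤ 1 / 2 := by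
      rw [hF, add_sub_cancel_right]
      exact hsmall z hre hdist
    linarith [norm_le_norm_add_norm_sub (F z) 1, norm_one (α := ℂ)]
  have hB := hR.rankOne_vadd φ ψ (hFz ▸ norm_pos_iff.1 (one_half_pos.trans_le hhalf))
  exact ⟨hhalf, _, hB.mem_domain,
    fun g _ => by rw [add_comm (A _)]; exact hB.sub_apply g,
    fun f hf => by rw [add_comm (A _)]; exact hB.apply_sub f hf⟩

/-- For `A` self-adjoint with simple discrete spectrum `{λₙ}_{n∈ℤ}`
separated by a gap `d > 0`, and `B = A + ⟨·,φ⟩ψ`: for every `ε > 0` there is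
`N > 0` such that every `z` with `|Re z| ≥ N` and `dist(z, spec A) ≥ ε` satisfies
`|F(z)| ≥ 1/2` (with `F(z) = Σₙ conj(aₙ)bₙ/(λₙ−z) + 1`), and consequently every
such `z` lies in the resolvent set of `B`. -/
theorem stmt_18 {H : Type*} [NormedAddCommGroup H] [InnerProductSpace ℂ H] [CompleteSpace H]
    (v : HilbertBasis ℤ ℂ H) (lam : ℤ → ℝ)
    (d : ℝ) (hd : 0 < d) (hgap : ∀ n : ℤ, d ≤ lam (n + 1) - lam n)
    (A : H →ₗ.[ℂ] H) (hA : IsSelfAdjoint A)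
    (hAv : ∀ n : ℤ, ∃ h : (v n : H) ∈ A.domain, A ⟨v n, h⟩ = (lam n : ℂ) • (v n : H))
    (φ ψ : H) (hφ : φ ≠ 0) (hψ : ψ ≠ 0)
    (a b : ℤ → ℂ)
    (ha : ∀ n, a n = (inner ℂ (v n : H) φ : ℂ)) (hb : ∀ n, b n = (inner ℂ (v n : H) ψ : ℂ))
    (F : ℂ → ℂ)
    (hF : ∀ z, F z = ∑' n, starRingEnd ℂ (a n) * b n / ((lam n : ℂ) - z) + 1) :
    ∀ ε > 0, ∃ N > (0 : ℝ), ∀ z : ℂ, N ≤ |z.re| →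
      (∀ n, ε ≤ ‖z - (lam n : ℂ)‖) →
      (1 / 2 ≤ ‖F z‖ ∧
        -- `z` is a resolvent point of `B = A + ⟨·,φ⟩ψ`:
        ∃ R : H →L[ℂ] H,
          (∀ g, R g ∈ A.domain) ∧
          (∀ g, ∀ h : R g ∈ A.domain,
            A ⟨R g, h⟩ + (inner ℂ φ (R g) : ℂ) • ψ - z • R g = g) ∧
          (∀ f : H, ∀ h : f ∈ A.domain,
            R (A ⟨f, h⟩ + (inner ℂ φ f : ℂ) • ψ - z • f) = f)) :=
  stmt_18_general v lam A hA hAv φ ψ a b ha hb F hF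
end
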